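/- The set {ε₅, β₂, β₂α₅, β₂α₅α₆, β₂α₅α₆β₁} is a K-basis of the indecomposable projective module ẽ₅E over E = E(m,λ); in particular dim_K ẽ₅E = 5. -/

import Mathlib

/-!
The algebra `E(m,λ)` of Skowyrski's "Two tilts of higher spherical algebras",
realized as the quotient of the path algebra of the quiver `Q_E` by the
relations (E1)-(E8).  Vertices `1,…,6` are encoded as `0,…,5 : Fin 6`.
The path algebra is presented as the free algebra on the trivial paths
(idempotents) and the arrows, modulo the path-algebra relations
(orthogonal idempotents summing to `1`, source/target compatibility)
and the relations (E1)-(E8).  Paths compose left to right.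
-/

namespace TwoTiltsE

/-- Arrows of `Q_E`: α₁:1→2, α₂:2→3, α₃:1→6, α₄:6→3, α₅:3→4, α₆:4→1,
β₁:1→5, β₂:5→3, γ₀:3→1. -/
inductive EArr | a1 | a2 | a3 | a4 | a5 | a6 | b1 | b2 | g0

/-- Source vertex of an arrow. -/
def EArr.src : EArr → Fin 6
  | .a1 => 0 | .a2 => 1 | .a3 => 0 | .a4 => 5 | .a5 => 2
  | .a6 => 3 | .b1 => 0 | .b2 => 4 | .g0 => 2

/-- Target vertex of an arrow. -/
def EArr.tgt : EArr → Fin 6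
  | .a1 => 1 | .a2 => 2 | .a3 => 5 | .a4 => 2 | .a5 => 3
  | .a6 => 0 | .b1 => 4 | .b2 => 2 | .g0 => 0

/-- `EPath c i j` : the list of arrows `c` is a path from vertex `i` to
vertex `j` in `Q_E` (consecutive arrows composable, left to right). -/
def EPath : List EArr → Fin 6 → Fin 6 → Prop
  | [], i, j => i = j
  | a :: c, i, j => a.src = i ∧ EPath c a.tgt j

/-- The free algebra on trivial paths and arrows of `Q_E`. -/
abbrev EFree (K : Type*) [Field K] := FreeAlgebra K (Fin 6 ⊕ EArr)

variable {K : Type*} [Field K]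

/-- Trivial path at vertex `i`. -/
def fe (i : Fin 6) : EFree K := FreeAlgebra.ι K (Sum.inl i)
/-- The arrow `a` as an element of the free algebra. -/
def fa (a : EArr) : EFree K := FreeAlgebra.ι K (Sum.inr a)
/-- The product of a list of arrows in the free algebra. -/
def pathProd (c : List EArr) : EFree K := (c.map fa).prod

def A1 : EFree K := fa .a1
def A2 : EFree K := fa .a2
def A3 : EFree K := fa .a3
def A4 : EFree K := fa .a4
def A5 : EFree K := fa .a5
def A6 : EFree K := fa .a6
def B1 : EFree K := fa .b1
def B2 : EFree K := fa .b2
def G0 : EFree K := fa .g0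

/-- The defining relations of `E(m,λ)`: path algebra relations together
with (E1)-(E8). -/
inductive ERel (K : Type*) [Field K] (m : ℕ) (l : K) : EFree K → EFree K → Prop
  | orth (i j : Fin 6) : ERel K m l (fe i * fe j) (if i = j then fe i else 0)
  | total : ERel K m l (∑ i, fe i) 1
  | src (a : EArr) : ERel K m l (fe a.src * fa a) (fa a)
  | tgt (a : EArr) : ERel K m l (fa a * fe a.tgt) (fa a)
  | E1 : ERel K m l (A1 * A2 - A3 * A4 + B1 * B2) 0
  | E2 : ERel K m l (A3 * A4 * A5)
      (A1 * A2 * A5 + l • ((A1 * A2 * A5 * A6) ^ (m - 1) * (A1 * A2 * A5)))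
  | E3a : ERel K m l (G0 * B1) 0
  | E3b : ERel K m l (G0 * A3) (A5 * A6 * A3)
  | E3c : ERel K m l (G0 * A1)
      (A5 * A6 * A1 + l • ((A5 * A6 * A1 * A2) ^ (m - 1) * (A5 * A6 * A1)))
  | E4a : ERel K m l (A2 * G0)
      (A2 * A5 * A6 + l • ((A2 * A5 * A6 * A1) ^ (m - 1) * (A2 * A5 * A6)))
  | E4b : ERel K m l ((A2 * A5 * A6 * A1) ^ (m - 1) * (A2 * A5 * A6 * A3)) 0
  | E5a : ERel K m l (A4 * G0) (A4 * A5 * A6)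
  | E5b : ERel K m l (A4 * A5 * A6 * A1 * (A2 * A5 * A6 * A1) ^ (m - 1)) 0
  | E6 : ERel K m l (A6 * A3 * A4)
      (A6 * A1 * A2 + l • ((A6 * A1 * A2 * A5) ^ (m - 1) * (A6 * A1 * A2)))
  | E7a : ERel K m l (B2 * G0) 0
  | E7b : ERel K m l (B2 * A5 * A6 * A1) 0
  | E7c : ERel K m l (B2 * A5 * A6 * A3) 0
  | E7d : ERel K m l (B2 * A5 * A6 * B1 * B2) 0
  | E8l (i : Fin 6) (c : List EArr) (hc : EPath c i i)
      (hlen : c.length = 3 ∨ c.length = 4) (θ : EArr) (hθ : θ.tgt = i) :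
      ERel K m l (fa θ * (pathProd c) ^ m) 0
  | E8r (i : Fin 6) (c : List EArr) (hc : EPath c i i)
      (hlen : c.length = 3 ∨ c.length = 4) (φ : EArr) (hφ : φ.src = i) :
      ERel K m l ((pathProd c) ^ m * fa φ) 0

/-- The algebra `E(m,λ)`. -/
abbrev EAlg (K : Type*) [Field K] (m : ℕ) (l : K) := RingQuot (ERel K m l)

/-- The canonical projection onto `E(m,λ)`. -/
noncomputable def eq' (K : Type*) [Field K] (m : ℕ) (l : K) :
    EFree K →ₐ[K] EAlg K m l := RingQuot.mkAlgHom K (ERel K m l)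

/-- The image in `E(m,λ)` of the trivial path at vertex `i`. -/
noncomputable def eidem (K : Type*) [Field K] (m : ℕ) (l : K) (i : Fin 6) :
    EAlg K m l := eq' K m l (fe i)

/-- The indecomposable projective right module `ẽᵢ E(m,λ)`, viewed as the
`K`-subspace `ẽᵢ·E(m,λ)` of `E(m,λ)`. -/
noncomputable def eproj (K : Type*) [Field K] (m : ℕ) (l : K) (i : Fin 6) :
    Submodule K (EAlg K m l) :=
  LinearMap.range (LinearMap.mulLeft K (eidem K m l i))

end TwoTiltsE

/-!
Right multiplication by a vertex or an arrow sends each of the paths `ε₅, β₂, β₂α₅, β₂α₅α₆,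
β₂α₅α₆β₁` to the next one, to itself or to `0` (the zeros come from (E7)), so these five paths
span `ẽ₅E`. For their independence, let `E(m,λ)` act on `K⁵` with `β₂, α₅, α₆, β₁` moving each
coordinate to the next one and all other arrows acting by `0`. Every arrow acts by a matrix
supported strictly above the diagonal, so a cycle of length `≥ 3` raised to the power `m ≥ 2`
acts by `0`; this gives (E8), and the other relations are checked directly. The first row of the
matrix of the `i`-th path is then the `i`-th unit vector.
-/

namespace Matrix

variable {R : Type*} [Semiring R] {n : ℕ}

def IsUpperBy (k : ℕ) (A : Matrix (Fin n) (Fin n) R) : Prop :=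
  ∀ i j, A i j ≠ 0 → (i : ℕ) + k ≤ j

theorem isUpperBy_zero (k : ℕ) : IsUpperBy k (0 : Matrix (Fin n) (Fin n) R) :=
  fun _ _ h => absurd rfl h

theorem isUpperBy_one : IsUpperBy 0 (1 : Matrix (Fin n) (Fin n) R) := by
  intro i j h
  rcases eq_or_ne i j with rfl | hne
  · omega
  · exact absurd (one_apply_ne hne) h

theorem isUpperBy_single {k : ℕ} {i j : Fin n} (h : (i : ℕ) + k ≤ j) (c : R) :
    IsUpperBy k (single i j c) := by
  intro a b hab
  rw [single_apply] at hab
  split_ifs at hab with hij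
  · obtain ⟨rfl, rfl⟩ := hij
    exact h
  · exact absurd rfl hab

namespace IsUpperBy

variable {k k' : ℕ} {A B : Matrix (Fin n) (Fin n) R}

theorem mul (hA : IsUpperBy k A) (hB : IsUpperBy k' B) : IsUpperBy (k + k') (A * B) := by
  intro i j h
  rw [mul_apply] at h
  obtain ⟨p, -, hp⟩ := Finset.exists_ne_zero_of_sum_ne_zero h
  have := hA i p (left_ne_zero_of_mul hp)
  have := hB p j (right_ne_zero_of_mul hp)
  omega

theorem pow (hA : IsUpperBy k A) (j : ℕ) : IsUpperBy (k * j) (A ^ j) := by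
  induction j with
  | zero => exact isUpperBy_one
  | succ j ih => simpa only [pow_succ, Nat.mul_succ] using ih.mul hA

theorem eq_zero (hA : IsUpperBy k A) (hk : n ≤ k) : A = 0 := by
  ext i j
  by_contra h
  have := hA i j h
  omega

end IsUpperBy

theorem isUpperBy_list_prod {L : List (Matrix (Fin n) (Fin n) R)}
    (h : ∀ A ∈ L, IsUpperBy 1 A) : IsUpperBy L.length L.prod := by
  induction L with
  | nil => exact isUpperBy_one
  | cons A L ih =>
    rw [List.prod_cons, List.length_cons, Nat.add_comm]
    exact (h A List.mem_cons_self).mul (ih fun B hB => h B (List.mem_cons_of_mem A hB))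

end Matrix

theorem FreeAlgebra.mul_mem_of_forall_mul_ι_mem {R X A : Type*} [CommSemiring R] [Semiring A]
    [Algebra R A] (f : FreeAlgebra R X →ₐ[R] A) {S : Submodule R A}
    (hS : ∀ s ∈ S, ∀ x, s * f (FreeAlgebra.ι R x) ∈ S) (y : FreeAlgebra R X) :
    ∀ s ∈ S, s * f y ∈ S := by
  induction y using FreeAlgebra.induction with
  | grade0 r =>
    intro s hs
    rw [AlgHom.commutes, ← Algebra.commutes, ← Algebra.smul_def]
    exact S.smul_mem r hs
  | grade1 x => exact fun s hs => hS s hs x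
  | mul x y hx hy =>
    exact fun s hs => by simpa only [map_mul, mul_assoc] using hy _ (hx s hs)
  | add x y hx hy =>
    exact fun s hs => by simpa only [map_add, mul_add] using S.add_mem (hx s hs) (hy s hs)

namespace TwoTiltsE

open Matrix

variable {K : Type*} [Field K]

/- The action of `E(m,λ)` by right multiplication on `ẽ₅E`, as matrices acting on row vectors
in the basis `ε₅, β₂, β₂α₅, β₂α₅α₆, β₂α₅α₆β₁`. -/
def repIdem : Fin 6 → Matrix (Fin 5) (Fin 5) K :=
  ![single 3 3 1, 0, single 1 1 1, single 2 2 1, single 0 0 1 + single 4 4 1, 0]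

def repArrow : EArr → Matrix (Fin 5) (Fin 5) K
  | .b2 => single 0 1 1
  | .a5 => single 1 2 1
  | .a6 => single 2 3 1
  | .b1 => single 3 4 1
  | _ => 0

noncomputable def rep : EFree K →ₐ[K] Matrix (Fin 5) (Fin 5) K :=
  FreeAlgebra.lift K (Sum.elim repIdem repArrow)

@[simp] theorem rep_fe (i : Fin 6) : rep (fe i : EFree K) = repIdem i :=
  FreeAlgebra.lift_ι_apply _ _

@[simp] theorem rep_fa (a : EArr) : rep (fa a : EFree K) = repArrow a :=
  FreeAlgebra.lift_ι_apply _ _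

theorem isUpperBy_repArrow (a : EArr) :
    IsUpperBy 1 (repArrow a : Matrix (Fin 5) (Fin 5) K) := by
  cases a <;> first | exact isUpperBy_zero 1 | exact isUpperBy_single (by decide) 1

theorem isUpperBy_rep_pathProd (c : List EArr) :
    IsUpperBy c.length (rep (pathProd c : EFree K)) := by
  rw [pathProd, map_list_prod, List.map_map, ← List.length_map (f := ⇑(rep (K := K)) ∘ fa)]
  refine isUpperBy_list_prod fun A hA => ?_
  obtain ⟨a, -, rfl⟩ := List.mem_map.1 hA
  simpa using isUpperBy_repArrow a

theorem rep_pathProd_pow_eq_zero {m : ℕ} (hm : 2 ≤ m) {c : List EArr} (hc : 3 ≤ c.length) :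
    rep (pathProd c : EFree K) ^ m = 0 :=
  ((isUpperBy_rep_pathProd c).pow m).eq_zero (by nlinarith)

theorem rep_eq_of_ERel {m : ℕ} {l : K} (hm : 2 ≤ m) {x y : EFree K} (h : ERel K m l x y) :
    rep x = rep y := by
  induction h with
  | orth i j => fin_cases i <;> fin_cases j <;> simp [repIdem, mul_add, add_mul]
  | total =>
    rw [map_sum, map_one, ← sum_single_one, Fin.sum_univ_six, Fin.sum_univ_five]
    simp [repIdem]
    abel
  | E8l _ c _ hlen =>
    rw [map_mul, map_pow, rep_pathProd_pow_eq_zero hm (by omega), mul_zero, map_zero]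
  | E8r _ c _ hlen =>
    rw [map_mul, map_pow, rep_pathProd_pow_eq_zero hm (by omega), zero_mul, map_zero]
  | src a | tgt a =>
    cases a <;> simp [repIdem, repArrow, EArr.src, EArr.tgt, mul_add, add_mul]
  | _ => simp [A1, A2, A3, A4, A5, A6, B1, B2, G0, repArrow]

noncomputable def repQuot {m : ℕ} (l : K) (hm : 2 ≤ m) :
    EAlg K m l →ₐ[K] Matrix (Fin 5) (Fin 5) K :=
  RingQuot.liftAlgHom K ⟨rep, fun _ _ => rep_eq_of_ERel hm⟩

theorem repQuot_eq' {m : ℕ} {l : K} (hm : 2 ≤ m) (x : EFree K) :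
    repQuot l hm (eq' K m l x) = rep x :=
  RingQuot.liftAlgHom_mkAlgHom_apply _ _ _ _

variable {m : ℕ} {l : K}

theorem eq'_eq_of_ERel {x y : EFree K} (h : ERel K m l x y) : eq' K m l x = eq' K m l y :=
  RingQuot.mkAlgHom_rel K h

theorem eq'_eq_zero_of_ERel {x : EFree K} (h : ERel K m l x 0) : eq' K m l x = 0 :=
  (eq'_eq_of_ERel h).trans (map_zero _)

theorem eq'_fe_mul_fe (i j : Fin 6) :
    eq' K m l (fe i) * eq' K m l (fe j) = if i = j then eq' K m l (fe i) else 0 := by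
  rw [← map_mul, eq'_eq_of_ERel (ERel.orth i j), apply_ite (eq' K m l), map_zero]

theorem eq'_fe_src_mul_fa (a : EArr) :
    eq' K m l (fe a.src) * eq' K m l (fa a) = eq' K m l (fa a) := by
  rw [← map_mul, eq'_eq_of_ERel (ERel.src a)]

theorem eq'_fa_mul_fe_tgt (a : EArr) :
    eq' K m l (fa a) * eq' K m l (fe a.tgt) = eq' K m l (fa a) := by
  rw [← map_mul, eq'_eq_of_ERel (ERel.tgt a)]

theorem eq'_mul_fa_mul_fe_tgt (x : EFree K) (a : EArr) :
    eq' K m l (x * fa a) * eq' K m l (fe a.tgt) = eq' K m l (x * fa a) := by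
  rw [map_mul, mul_assoc, eq'_fa_mul_fe_tgt]

variable (K m l) in
noncomputable def pathFromFive : Fin 5 → EAlg K m l :=
  ![eq' K m l (fe 4), eq' K m l B2, eq' K m l (B2 * A5), eq' K m l (B2 * A5 * A6),
    eq' K m l (B2 * A5 * A6 * B1)]

def pathFromFiveEnd : Fin 5 → Fin 6 := ![4, 2, 3, 0, 4]

theorem pathFromFive_mul_fe_end (i : Fin 5) :
    pathFromFive K m l i * eq' K m l (fe (pathFromFiveEnd i)) = pathFromFive K m l i := by
  fin_cases i
  · exact (eq'_fe_mul_fe 4 4).trans (if_pos rfl)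
  · exact eq'_fa_mul_fe_tgt .b2
  · exact eq'_mul_fa_mul_fe_tgt B2 .a5
  · exact eq'_mul_fa_mul_fe_tgt (B2 * A5) .a6
  · exact eq'_mul_fa_mul_fe_tgt (B2 * A5 * A6) .b1

theorem pathFromFive_mul_fe (i : Fin 5) (j : Fin 6) :
    pathFromFive K m l i * eq' K m l (fe j) =
      if pathFromFiveEnd i = j then pathFromFive K m l i else 0 := by
  conv_lhs => rw [← pathFromFive_mul_fe_end]
  rw [mul_assoc, eq'_fe_mul_fe, mul_ite, mul_zero, pathFromFive_mul_fe_end]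

theorem pathFromFive_mul_fa_of_ne {i : Fin 5} {a : EArr} (h : pathFromFiveEnd i ≠ a.src) :
    pathFromFive K m l i * eq' K m l (fa a) = 0 := by
  rw [← eq'_fe_src_mul_fa, ← mul_assoc, pathFromFive_mul_fe, if_neg h, zero_mul]

theorem pathFromFive_mul_fa_mem_span (i : Fin 5) (a : EArr) :
    pathFromFive K m l i * eq' K m l (fa a) ∈
      Submodule.span K (Set.range (pathFromFive K m l)) := by
  by_cases h : pathFromFiveEnd i = a.src
  swap
  · rw [pathFromFive_mul_fa_of_ne h]
    exact Submodule.zero_mem _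
  have path (j : Fin 5) (hj : pathFromFive K m l i * eq' K m l (fa a) = pathFromFive K m l j) :
      pathFromFive K m l i * eq' K m l (fa a) ∈
        Submodule.span K (Set.range (pathFromFive K m l)) :=
    hj ▸ Submodule.subset_span ⟨j, rfl⟩
  have zero (x : EFree K) (hx : pathFromFive K m l i = eq' K m l x)
      (rel : ERel K m l (x * fa a) 0) :
      pathFromFive K m l i * eq' K m l (fa a) ∈
        Submodule.span K (Set.range (pathFromFive K m l)) := by
    rw [hx, ← map_mul, eq'_eq_zero_of_ERel rel]
    exact Submodule.zero_mem _
  fin_cases i <;> cases a <;> try exact absurd h (by decide)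
  · exact path 1 (eq'_fe_src_mul_fa .b2)
  · exact path 2 (map_mul _ _ _).symm
  · exact zero B2 rfl ERel.E7a
  · exact path 3 (map_mul _ _ _).symm
  · exact zero (B2 * A5 * A6) rfl ERel.E7b
  · exact zero (B2 * A5 * A6) rfl ERel.E7c
  · exact path 4 (map_mul _ _ _).symm
  · exact zero (B2 * A5 * A6 * B1) rfl ERel.E7d

theorem pathFromFive_mul_fe_mem_span (i : Fin 5) (j : Fin 6) :
    pathFromFive K m l i * eq' K m l (fe j) ∈
      Submodule.span K (Set.range (pathFromFive K m l)) := by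
  rw [pathFromFive_mul_fe]
  split_ifs
  · exact Submodule.subset_span ⟨i, rfl⟩
  · exact Submodule.zero_mem _

theorem mul_eq'_mem_span_pathFromFive {s : EAlg K m l}
    (hs : s ∈ Submodule.span K (Set.range (pathFromFive K m l))) (y : EFree K) :
    s * eq' K m l y ∈ Submodule.span K (Set.range (pathFromFive K m l)) := by
  refine FreeAlgebra.mul_mem_of_forall_mul_ι_mem (eq' K m l) (fun t ht x => ?_) y s hs
  refine (Submodule.span_le (p := (Submodule.span K _).comap (LinearMap.mulRight K _))).2 ?_ ht
  rintro _ ⟨i, rfl⟩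
  cases x with
  | inl j => exact pathFromFive_mul_fe_mem_span i j
  | inr a => exact pathFromFive_mul_fa_mem_span i a

theorem fe_four_mul_pathFromFive (i : Fin 5) :
    eq' K m l (fe 4) * pathFromFive K m l i = pathFromFive K m l i := by
  have hB2 : eq' K m l (fe 4) * eq' K m l B2 = eq' K m l B2 := eq'_fe_src_mul_fa .b2
  fin_cases i
  · exact (eq'_fe_mul_fe 4 4).trans (if_pos rfl)
  all_goals simp [pathFromFive, ← mul_assoc, hB2]

theorem eproj_four_eq_span :
    eproj K m l 4 = Submodule.span K (Set.range (pathFromFive K m l)) := by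
  apply le_antisymm
  · rintro _ ⟨y, rfl⟩
    obtain ⟨z, rfl⟩ := RingQuot.mkAlgHom_surjective K (ERel K m l) y
    exact mul_eq'_mem_span_pathFromFive (Submodule.subset_span ⟨0, rfl⟩) z
  · rw [Submodule.span_le]
    rintro _ ⟨i, rfl⟩
    exact ⟨pathFromFive K m l i, fe_four_mul_pathFromFive i⟩

theorem repQuot_pathFromFive_zero (hm : 2 ≤ m) (i : Fin 5) :
    repQuot l hm (pathFromFive K m l i) 0 = Pi.single i 1 := by
  fin_cases i <;> ext j <;>
    simp [pathFromFive, repQuot_eq', B2, A5, A6, B1, repIdem, repArrow, single_mul_single_same,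
      single_apply, Pi.single_apply, eq_comm]

theorem linearIndependent_pathFromFive (hm : 2 ≤ m) :
    LinearIndependent K (pathFromFive K m l) := by
  let firstRow : EAlg K m l →ₗ[K] (Fin 5 → K) :=
    (LinearMap.proj 0).comp (repQuot l hm).toLinearMap
  refine LinearIndependent.of_comp firstRow ?_
  convert (Pi.basisFun K (Fin 5)).linearIndependent
  ext1 i
  exact (repQuot_pathFromFive_zero hm i).trans (Pi.basisFun_apply K (Fin 5) i).symm

end TwoTiltsE

open TwoTiltsE in
theorem E_basis_proj_five_general (K : Type*) [Field K] (m : ℕ) (hm : 2 ≤ m)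
    (l : K) :
    (∃ b : Module.Basis (Fin 5) K (eproj K m l 4),
      (b 0 : EAlg K m l) = eq' K m l (fe 4) ∧
      (b 1 : EAlg K m l) = eq' K m l B2 ∧
      (b 2 : EAlg K m l) = eq' K m l (B2 * A5) ∧
      (b 3 : EAlg K m l) = eq' K m l (B2 * A5 * A6) ∧
      (b 4 : EAlg K m l) = eq' K m l (B2 * A5 * A6 * B1)) ∧
    Module.finrank K (eproj K m l 4) = 5 := by
  have hli := linearIndependent_pathFromFive (l := l) hm
  let b : Module.Basis (Fin 5) K (eproj K m l 4) :=
    (Module.Basis.span hli).map (LinearEquiv.ofEq _ _ eproj_four_eq_span.symm)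
  have hb (i : Fin 5) : (b i : EAlg K m l) = pathFromFive K m l i := by
    simp [b, Module.Basis.span_apply]
  refine ⟨⟨b, hb 0, hb 1, hb 2, hb 3, hb 4⟩, ?_⟩
  rw [Module.finrank_eq_card_basis b, Fintype.card_fin]

open TwoTiltsE in
/-- The set `{ε₅, β₂, β₂α₅, β₂α₅α₆, β₂α₅α₆β₁}` is a `K`-basis of the
indecomposable projective module `ẽ₅E` over `E = E(m,λ)`; in particular
`dim_K ẽ₅E = 5`.  (Vertex `5` is encoded as `4 : Fin 6`.) -/
theorem E_basis_proj_five (K : Type*) [Field K] (m : ℕ) (hm : 2 ≤ m)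
    (l : K) (hl : l ≠ 0) :
    (∃ b : Module.Basis (Fin 5) K (eproj K m l 4),
      (b 0 : EAlg K m l) = eq' K m l (fe 4) ∧
      (b 1 : EAlg K m l) = eq' K m l B2 ∧
      (b 2 : EAlg K m l) = eq' K m l (B2 * A5) ∧
      (b 3 : EAlg K m l) = eq' K m l (B2 * A5 * A6) ∧
      (b 4 : EAlg K m l) = eq' K m l (B2 * A5 * A6 * B1)) ∧
    Module.finrank K (eproj K m l 4) = 5 :=
  E_basis_proj_five_general K m hm l
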